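/- Non-existence of a Euclidean solution for non-analytic Cauchy data (Example 1): let H = {z ∈ ℂ : Im z < 0} be the open lower half-plane. There do not exist functions f, g : ℂ → ℂ, holomorphic on H, such that f, g and their derivatives f′, g′ extend continuously to H ∪ ℝ and for every real x the boundary values satisfy: f(x) + conj(g(x)) = exp(−1/x²) if x > 0 and f(x) + conj(g(x)) = 0 if x ≤ 0, together with −f′(x) + conj(g′(x)) = 0 for all x ∈ ℝ. -/

import Mathlib

open Complex Filter Set

section Helpers

open Asymptotics intervalIntegral MeasureTheory Topology

noncomputable section

namespace NoEuclidAux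

lemma isOpen_LH : IsOpen {z : ℂ | z.im < 0} := isOpen_lt Complex.continuous_im continuous_const

lemma isOpen_UH : IsOpen {z : ℂ | 0 < z.im} := isOpen_lt continuous_const Complex.continuous_im

lemma tendsto_seq (t : ℝ) :
    Tendsto (fun n : ℕ => (t : ℂ) - (1 / (n + 1) : ℝ) * I) atTop (𝓝 (t : ℂ)) := by
  have h0 : Tendsto (fun n : ℕ => (1 / (n + 1) : ℝ)) atTop (𝓝 0) :=
    tendsto_one_div_add_atTop_nhds_zero_nat
  have h1 : Tendsto (fun n : ℕ => ((1 / (n + 1) : ℝ) : ℂ)) atTop (𝓝 ((0 : ℝ) : ℂ)) :=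
    (Complex.continuous_ofReal.tendsto 0).comp h0
  have h2 : Tendsto (fun n : ℕ => (t : ℂ) - ((1 / (n + 1) : ℝ) : ℂ) * I) atTop
      (𝓝 ((t : ℂ) - ((0:ℝ):ℂ) * I)) :=
    Tendsto.sub tendsto_const_nhds (h1.mul tendsto_const_nhds)
  simpa using h2

lemma seq_mem_LH (t : ℝ) (n : ℕ) :
    (t : ℂ) - (1 / (n + 1) : ℝ) * I ∈ {z : ℂ | z.im < 0} := by
  have : (0:ℝ) < 1 / (n + 1) := by positivity
  simp only [mem_setOf_eq, Complex.sub_im, Complex.ofReal_im, Complex.mul_im,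
    Complex.ofReal_re, Complex.I_im, Complex.I_re, Complex.ofReal_im, mul_one, mul_zero]
  linarith

lemma tendsto_seq_within (t : ℝ) :
    Tendsto (fun n : ℕ => (t : ℂ) - (1 / (n + 1) : ℝ) * I) atTop
      (𝓝[{z : ℂ | z.im < 0}] (t : ℂ)) :=
  tendsto_nhdsWithin_of_tendsto_nhds_of_eventually_within _ (tendsto_seq t)
    (Eventually.of_forall (seq_mem_LH t))

instance neBot_LH (x : ℝ) : ((𝓝[{z : ℂ | z.im < 0}] (x : ℂ)).NeBot) := by
  rw [← mem_closure_iff_nhdsWithin_neBot]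
  exact mem_closure_of_tendsto (tendsto_seq x) (Eventually.of_forall (seq_mem_LH x))




lemma norm_ofReal_sub (a b : ℝ) : ‖(a:ℂ) - (b:ℂ)‖ = |a - b| := by
  rw [← Complex.ofReal_sub, Complex.norm_real, Real.norm_eq_abs]

/-- the key ε-δ boundary estimate -/
lemma key_est {h : ℂ → ℂ} {Hb : ℝ → ℂ}
    (hne : ∀ x : ℝ, ((𝓝[{z : ℂ | z.im < 0}] (x : ℂ)).NeBot))
    (hb : ∀ x : ℝ, Tendsto h (𝓝[{z : ℂ | z.im < 0}] (x : ℂ)) (𝓝 (Hb x)))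
    (x : ℝ) {ε : ℝ} (hε : 0 < ε) :
    ∃ δ > 0, ∀ w : ℂ, w.im ≤ 0 → ‖w - (x : ℂ)‖ < δ →
      dist (if w.im < 0 then h w else Hb w.re) (Hb x) ≤ ε := by
  obtain ⟨δ, hδ, hδ'⟩ := (Metric.tendsto_nhdsWithin_nhds.1 (hb x)) ε hε
  refine ⟨δ, hδ, fun w hwim hwx => ?_⟩
  rcases lt_or_eq_of_le hwim with hlt | heq
  · rw [if_pos hlt]
    exact le_of_lt (hδ' hlt (by rwa [dist_eq_norm]))
  · rw [if_neg (by simp [← heq])]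
    -- w is real; w = w.re
    have hwre : ((w.re : ℂ)) = w := Complex.ext (by simp) (by simp [heq])
    set y := w.re with hy
    have hyx : |y - x| < δ := by
      have : ((y : ℂ) - (x:ℂ)) = w - x := by rw [hwre]
      rw [← norm_ofReal_sub, this]; exact hwx
    -- use limit at y
    haveI := hne y
    have htd : Tendsto (fun w' => dist (h w') (Hb x)) (𝓝[{z : ℂ | z.im < 0}] (y : ℂ))
        (𝓝 (dist (Hb y) (Hb x))) := (hb y).dist tendsto_const_nhds
    refine le_of_tendsto htd ?_
    have hball : ∀ᶠ w' in 𝓝[{z : ℂ | z.im < 0}] (y : ℂ), dist w' (y:ℂ) < δ - |y - x| :=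
      eventually_nhdsWithin_of_eventually_nhds
        (Metric.ball_mem_nhds _ (by linarith))
    filter_upwards [hball, self_mem_nhdsWithin] with w' hw1 hw2
    have : dist w' (x:ℂ) < δ := by
      have h3 : dist ((y:ℂ)) ((x:ℂ)) = |y - x| := by
        rw [dist_eq_norm, norm_ofReal_sub]
      calc dist w' (x:ℂ) ≤ dist w' (y:ℂ) + dist ((y:ℂ)) ((x:ℂ)) := dist_triangle _ _ _
        _ < (δ - |y - x|) + |y - x| := by rw [h3]; linarith
        _ = δ := by ring
    exact le_of_lt (hδ' hw2 this)

lemma glue_cont {h : ℂ → ℂ} {Hb : ℝ → ℂ}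
    (hne : ∀ x : ℝ, ((𝓝[{z : ℂ | z.im < 0}] (x : ℂ)).NeBot))
    (hcont : ContinuousOn h {z : ℂ | z.im < 0})
    (hb : ∀ x : ℝ, Tendsto h (𝓝[{z : ℂ | z.im < 0}] (x : ℂ)) (𝓝 (Hb x))) :
    Continuous (fun z : ℂ => if z.im < 0 then h z else Hb z.re) := by
  set he : ℂ → ℂ := fun z => if z.im < 0 then h z else Hb z.re with hhe
  rw [continuous_iff_continuousAt]
  intro z
  rcases lt_trichotomy z.im 0 with hz | hz | hz
  · have hev : ∀ᶠ w in 𝓝 z, h w = he w := by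
      filter_upwards [isOpen_LH.mem_nhds hz] with w hw
      simp [hhe, if_pos hw]
    exact (hcont.continuousAt (isOpen_LH.mem_nhds hz)).congr hev
  · -- boundary point
    rw [Metric.continuousAt_iff]
    intro ε hε
    obtain ⟨δ, hδ, hkey⟩ := key_est hne hb z.re (half_pos hε)
    have hzre : ((z.re : ℂ)) = z := Complex.ext (by simp) (by simp [hz])
    refine ⟨δ, hδ, fun {w} hw => ?_⟩
    have hze : he z = Hb z.re := by simp [hhe, hz]
    rw [hze]
    rcases le_or_gt w.im 0 with hw0 | hw0
    · have : dist (he w) (Hb z.re) ≤ ε / 2 := by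
        have := hkey w hw0 (by rw [← dist_eq_norm, hzre]; exact hw)
        simpa [hhe] using this
      linarith
    · have hwe : he w = Hb w.re := by simp [hhe, not_lt.2 (le_of_lt hw0)]
      have h2 : dist (he ((w.re : ℂ))) (Hb z.re) ≤ ε / 2 := by
        apply hkey _ (by simp) _
        calc ‖((w.re:ℂ)) - (z.re:ℂ)‖ = |w.re - z.re| := norm_ofReal_sub _ _
          _ = |(w - z).re| := by rw [Complex.sub_re]
          _ ≤ ‖w - z‖ := Complex.abs_re_le_norm _
          _ < δ := by rwa [← dist_eq_norm]
      have : he ((w.re : ℂ)) = Hb w.re := by simp [hhe]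
      rw [hwe, ← this]
      linarith [h2]
  · -- upper half: he w = Hb w.re near z
    rw [Metric.continuousAt_iff]
    intro ε hε
    obtain ⟨δ, hδ, hkey⟩ := key_est hne hb z.re (half_pos hε)
    refine ⟨min δ z.im, lt_min hδ hz, fun {w} hw => ?_⟩
    have hwim : 0 < w.im := by
      have : |w.im - z.im| ≤ ‖w - z‖ := by
        rw [← Complex.sub_im]; exact Complex.abs_im_le_norm _
      rw [← dist_eq_norm] at this
      have h4 : |w.im - z.im| < z.im := lt_of_le_of_lt this (lt_of_lt_of_le hw (min_le_right _ _))
      have := abs_lt.1 h4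
      linarith [this.1]
    have hwe : he w = Hb w.re := by simp [hhe, not_lt.2 (le_of_lt hwim)]
    have hze : he z = Hb z.re := by simp [hhe, not_lt.2 (le_of_lt hz)]
    have h2 : dist (he ((w.re : ℂ))) (Hb z.re) ≤ ε / 2 := by
      apply hkey _ (by simp) _
      calc ‖((w.re:ℂ)) - (z.re:ℂ)‖ = |w.re - z.re| := norm_ofReal_sub _ _
        _ = |(w - z).re| := by rw [Complex.sub_re]
        _ ≤ ‖w - z‖ := Complex.abs_re_le_norm _
        _ < δ := by rw [← dist_eq_norm]; exact lt_of_lt_of_le hw (min_le_left _ _)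
    have h3 : he ((w.re : ℂ)) = Hb w.re := by simp [hhe]
    rw [hwe, hze, ← h3]
    linarith [h2]

lemma glue_cont_real {h : ℂ → ℂ} {Hb : ℝ → ℂ}
    (hne : ∀ x : ℝ, ((𝓝[{z : ℂ | z.im < 0}] (x : ℂ)).NeBot))
    (hcont : ContinuousOn h {z : ℂ | z.im < 0})
    (hb : ∀ x : ℝ, Tendsto h (𝓝[{z : ℂ | z.im < 0}] (x : ℂ)) (𝓝 (Hb x))) :
    Continuous Hb := by
  have h1 := (glue_cont hne hcont hb).comp Complex.continuous_ofReal
  have h2 : ((fun z : ℂ => if z.im < 0 then h z else Hb z.re) ∘ Complex.ofReal) = Hb := by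
    funext y; simp
  rwa [h2] at h1



lemma cont_horiz {Φ : ℂ → ℂ} (hc : Continuous Φ) (u : ℝ) :
    Continuous fun x : ℝ => Φ (x + u * I) := by
  apply hc.comp; continuity

lemma cont_vert {Φ : ℂ → ℂ} (hc : Continuous Φ) (a : ℝ) :
    Continuous fun y : ℝ => Φ (a + y * I) := by
  apply hc.comp; continuity

lemma rect_zero {Φ : ℂ → ℂ} (hc : Continuous Φ)
    (hd : ∀ z : ℂ, z.im ≠ 0 → DifferentiableAt ℂ Φ z) (a b u v : ℝ) :
    (∫ x in a..b, Φ (x + u * I)) - (∫ x in a..b, Φ (x + v * I))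
      + I • (∫ y in u..v, Φ (b + y * I)) - I • (∫ y in u..v, Φ (a + y * I)) = 0 := by
  have half : ∀ u : ℝ,
      (∫ x in a..b, Φ (x + u * I)) - (∫ x in a..b, Φ (x + (0:ℝ) * I))
        + I • (∫ y in u..(0:ℝ), Φ (b + y * I)) - I • (∫ y in u..(0:ℝ), Φ (a + y * I)) = 0 := by
    intro u
    have h := Complex.integral_boundary_rect_eq_zero_of_continuousOn_of_differentiableOn Φ
      (a + u * I) (b + (0:ℝ) * I) (hc.continuousOn) ?_
    · simpa using h
    · intro p hp
      rw [Complex.mem_reProdIm] at hp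
      apply (hd p ?_).differentiableWithinAt
      intro hp0
      have h1 := hp.2.1
      have h2 := hp.2.2
      simp only [Complex.add_im, Complex.ofReal_im, Complex.mul_im, Complex.I_im, Complex.I_re,
        Complex.ofReal_re, Complex.ofReal_im, mul_one, mul_zero, zero_add, add_zero, hp0] at h1 h2
      -- h1 : min u 0 < 0, h2 : 0 < max u 0  (after simp of im values)
      rcases le_or_gt u 0 with hu | hu
      · rw [max_eq_right hu] at h2; exact lt_irrefl _ h2
      · rw [min_eq_right hu.le] at h1; exact lt_irrefl _ h1
  have hu := half u
  have hv := half v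
  have hadjb : (∫ y in u..(0:ℝ), Φ (b + y * I)) + (∫ y in (0:ℝ)..v, Φ (b + y * I))
      = ∫ y in u..v, Φ (b + y * I) :=
    integral_add_adjacent_intervals ((cont_vert hc b).intervalIntegrable _ _)
      ((cont_vert hc b).intervalIntegrable _ _)
  have hadja : (∫ y in u..(0:ℝ), Φ (a + y * I)) + (∫ y in (0:ℝ)..v, Φ (a + y * I))
      = ∫ y in u..v, Φ (a + y * I) :=
    integral_add_adjacent_intervals ((cont_vert hc a).intervalIntegrable _ _)
      ((cont_vert hc a).intervalIntegrable _ _)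
  have hsymb : (∫ y in (0:ℝ)..v, Φ (b + y * I)) = -∫ y in v..(0:ℝ), Φ (b + y * I) :=
    integral_symm _ _
  have hsyma : (∫ y in (0:ℝ)..v, Φ (a + y * I)) = -∫ y in v..(0:ℝ), Φ (a + y * I) :=
    integral_symm _ _
  simp only [smul_eq_mul] at *
  linear_combination hu - hv - I * hadjb + I * hadja + I * hsymb - I * hsyma

lemma morera {Φ : ℂ → ℂ} (hc : Continuous Φ)
    (hd : ∀ z : ℂ, z.im ≠ 0 → DifferentiableAt ℂ Φ z) :
    Differentiable ℂ Φ := by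
  set P : ℂ → ℂ := fun z =>
    (∫ t in (0:ℝ)..z.re, Φ (t + (0:ℝ) * I)) + I * ∫ s in (0:ℝ)..z.im, Φ (z.re + s * I) with hP
  have key : ∀ z w : ℂ, P w - P z =
      (∫ x in z.re..w.re, Φ (x + z.im * I)) + I * ∫ y in z.im..w.im, Φ (w.re + y * I) := by
    intro z w
    have r0 := rect_zero hc hd z.re w.re 0 z.im
    have hA : (∫ t in (0:ℝ)..z.re, Φ (t + (0:ℝ)*I)) + (∫ t in z.re..w.re, Φ (t + (0:ℝ)*I))
        = ∫ t in (0:ℝ)..w.re, Φ (t + (0:ℝ)*I) :=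
      integral_add_adjacent_intervals ((cont_horiz hc 0).intervalIntegrable _ _)
        ((cont_horiz hc 0).intervalIntegrable _ _)
    have hB : (∫ s in (0:ℝ)..z.im, Φ (w.re + s*I)) + (∫ s in z.im..w.im, Φ (w.re + s*I))
        = ∫ s in (0:ℝ)..w.im, Φ (w.re + s*I) :=
      integral_add_adjacent_intervals ((cont_vert hc w.re).intervalIntegrable _ _)
        ((cont_vert hc w.re).intervalIntegrable _ _)
    simp only [hP, smul_eq_mul] at r0 ⊢
    linear_combination r0 - hA - I * hB
  have hder : ∀ z : ℂ, HasDerivAt P (Φ z) z := by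
    intro z
    rw [hasDerivAt_iff_isLittleO, isLittleO_iff]
    intro c hc0
    obtain ⟨δ, hδ, hδ'⟩ := Metric.continuousAt_iff.1 hc.continuousAt (c/4) (by linarith)
    rw [Metric.eventually_nhds_iff]
    refine ⟨δ/2, by linarith, fun w hw => ?_⟩
    have hnorm : ‖w - z‖ < δ/2 := by rwa [dist_eq_norm] at hw
    have hre : |w.re - z.re| ≤ ‖w - z‖ := by
      rw [← Complex.sub_re]; exact Complex.abs_re_le_norm _
    have him : |w.im - z.im| ≤ ‖w - z‖ := by
      rw [← Complex.sub_im]; exact Complex.abs_im_le_norm _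
    have e1 : ∫ x in z.re..w.re, (Φ (x + z.im*I) - Φ z)
        = (∫ x in z.re..w.re, Φ (x + z.im*I)) - (w.re - z.re) • Φ z := by
      rw [integral_sub ((cont_horiz hc z.im).intervalIntegrable _ _)
        (intervalIntegrable_const), intervalIntegral.integral_const]
    have e2 : ∫ y in z.im..w.im, (Φ (w.re + y*I) - Φ z)
        = (∫ y in z.im..w.im, Φ (w.re + y*I)) - (w.im - z.im) • Φ z := by
      rw [integral_sub ((cont_vert hc w.re).intervalIntegrable _ _)
        (intervalIntegrable_const), intervalIntegral.integral_const]
    have hwz : (w - z) = ((w.re - z.re : ℝ):ℂ) + ((w.im - z.im : ℝ):ℂ) * I := by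
      apply Complex.ext <;> simp
    have hsub : P w - P z - (w - z) • Φ z =
        (∫ x in z.re..w.re, (Φ (x + z.im*I) - Φ z))
          + I * ∫ y in z.im..w.im, (Φ (w.re + y*I) - Φ z) := by
      rw [e1, e2, key z w, smul_eq_mul, hwz]
      simp only [Complex.real_smul]
      push_cast
      ring
    have b1 : ‖∫ x in z.re..w.re, (Φ (x + z.im*I) - Φ z)‖ ≤ (c/4) * |w.re - z.re| := by
      apply intervalIntegral.norm_integral_le_of_norm_le_const
      intro x hx
      have hx' : x ∈ Set.uIcc z.re w.re := uIoc_subset_uIcc hx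
      have hd1 : |x - z.re| ≤ |w.re - z.re| := by
        have := Real.dist_le_of_mem_uIcc hx' left_mem_uIcc
        rw [Real.dist_eq, Real.dist_eq] at this
        rwa [abs_sub_comm w.re z.re]
      have hpt : ((x:ℂ) + z.im*I) - z = ((x - z.re : ℝ):ℂ) := by
        apply Complex.ext <;> simp
      have hdist : dist ((x:ℂ) + z.im*I) z < δ := by
        rw [dist_eq_norm, hpt, Complex.norm_real, Real.norm_eq_abs]
        calc |x - z.re| ≤ |w.re - z.re| := hd1
          _ ≤ ‖w - z‖ := hre
          _ < δ/2 := hnorm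
          _ < δ := by linarith
      have := hδ' hdist
      rw [dist_eq_norm] at this
      linarith
    have b2 : ‖∫ y in z.im..w.im, (Φ (w.re + y*I) - Φ z)‖ ≤ (c/4) * |w.im - z.im| := by
      apply intervalIntegral.norm_integral_le_of_norm_le_const
      intro y hy
      have hy' : y ∈ Set.uIcc z.im w.im := uIoc_subset_uIcc hy
      have hd1 : |y - z.im| ≤ |w.im - z.im| := by
        have := Real.dist_le_of_mem_uIcc hy' left_mem_uIcc
        rw [Real.dist_eq, Real.dist_eq] at this
        rwa [abs_sub_comm w.im z.im]
      have hpt : ((w.re:ℂ) + y*I) - z = ((w.re - z.re : ℝ):ℂ) + ((y - z.im:ℝ):ℂ)*I := by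
        apply Complex.ext <;> simp
      have hdist : dist ((w.re:ℂ) + y*I) z < δ := by
        rw [dist_eq_norm, hpt]
        calc ‖((w.re - z.re : ℝ):ℂ) + ((y - z.im:ℝ):ℂ)*I‖
            ≤ ‖((w.re - z.re : ℝ):ℂ)‖ + ‖((y - z.im:ℝ):ℂ)*I‖ := norm_add_le _ _
          _ = |w.re - z.re| + |y - z.im| := by
              rw [norm_mul, Complex.norm_I, mul_one, Complex.norm_real, Complex.norm_real,
                Real.norm_eq_abs, Real.norm_eq_abs]
          _ < δ/2 + δ/2 := by
              have h1 : |w.re - z.re| < δ/2 := lt_of_le_of_lt hre hnorm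
              have h2 : |y - z.im| ≤ |w.im - z.im| := hd1
              have h3 : |w.im - z.im| < δ/2 := lt_of_le_of_lt him hnorm
              linarith
          _ = δ := by ring
      have := hδ' hdist
      rw [dist_eq_norm] at this
      linarith
    rw [hsub]
    calc ‖(∫ x in z.re..w.re, (Φ (x + z.im*I) - Φ z))
          + I * ∫ y in z.im..w.im, (Φ (w.re + y*I) - Φ z)‖
        ≤ ‖∫ x in z.re..w.re, (Φ (x + z.im*I) - Φ z)‖
          + ‖I * ∫ y in z.im..w.im, (Φ (w.re + y*I) - Φ z)‖ := norm_add_le _ _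
      _ = ‖∫ x in z.re..w.re, (Φ (x + z.im*I) - Φ z)‖
          + ‖∫ y in z.im..w.im, (Φ (w.re + y*I) - Φ z)‖ := by
            rw [norm_mul, Complex.norm_I, one_mul]
      _ ≤ (c/4) * |w.re - z.re| + (c/4) * |w.im - z.im| := add_le_add b1 b2
      _ ≤ (c/4) * ‖w - z‖ + (c/4) * ‖w - z‖ := by
            have h4 : (0:ℝ) ≤ c/4 := by linarith
            exact add_le_add (mul_le_mul_of_nonneg_left hre h4)
              (mul_le_mul_of_nonneg_left him h4)
      _ ≤ c * ‖w - z‖ := by nlinarith [norm_nonneg (w - z)]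
  have hPdiff : Differentiable ℂ P := fun z => (hder z).differentiableAt
  have hderiv : deriv P = Φ := funext fun z => (hder z).deriv
  rw [← hderiv]
  exact differentiableOn_univ.1
    ((analyticOnNhd_univ_iff_differentiable.2 hPdiff).deriv.differentiableOn)

lemma hasDerivAt_conj_conj {h : ℂ → ℂ} {d x : ℂ}
    (H : HasDerivAt h d ((starRingEnd ℂ) x)) :
    HasDerivAt (fun z => (starRingEnd ℂ) (h ((starRingEnd ℂ) z))) ((starRingEnd ℂ) d) x := by
  rw [hasDerivAt_iff_isLittleO] at H ⊢
  have hconj : Tendsto (fun z : ℂ => (starRingEnd ℂ) z) (𝓝 x) (𝓝 ((starRingEnd ℂ) x)) :=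
    (Complex.continuous_conj).tendsto x
  have H2 := H.comp_tendsto hconj
  rw [isLittleO_iff] at H2 ⊢
  intro c hc
  filter_upwards [H2 hc] with z hz
  have e1 : ‖(starRingEnd ℂ) (h ((starRingEnd ℂ) z)) - (starRingEnd ℂ) (h ((starRingEnd ℂ) x))
      - (z - x) • (starRingEnd ℂ) d‖
      = ‖h ((starRingEnd ℂ) z) - h ((starRingEnd ℂ) x)
        - ((starRingEnd ℂ) z - (starRingEnd ℂ) x) • d‖ := by
    rw [← RCLike.norm_conj (h ((starRingEnd ℂ) z) - h ((starRingEnd ℂ) x)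
      - ((starRingEnd ℂ) z - (starRingEnd ℂ) x) • d)]
    congr 1
    simp only [smul_eq_mul, map_sub, map_mul, Complex.conj_conj]
  have e2 : ‖z - x‖ = ‖(starRingEnd ℂ) z - (starRingEnd ℂ) x‖ := by
    rw [← map_sub, RCLike.norm_conj]
  rw [e1, e2]
  exact hz



lemma boundary_integral {h : ℂ → ℂ} {Hb Hb' : ℝ → ℂ}
    (hdiff : DifferentiableOn ℂ h {z : ℂ | z.im < 0})
    (hb : ∀ x : ℝ, Tendsto h (𝓝[{z : ℂ | z.im < 0}] (x:ℂ)) (𝓝 (Hb x)))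
    (hb' : ∀ x : ℝ, Tendsto (deriv h) (𝓝[{z : ℂ | z.im < 0}] (x:ℂ)) (𝓝 (Hb' x)))
    (x y : ℝ) : ∫ t in x..y, Hb' t = Hb y - Hb x := by
  have hAn : AnalyticOnNhd ℂ h {z : ℂ | z.im < 0} := hdiff.analyticOnNhd isOpen_LH
  have hd'cont : ContinuousOn (deriv h) {z : ℂ | z.im < 0} := hAn.deriv.continuousOn
  set D : ℂ → ℂ := fun z => if z.im < 0 then deriv h z else Hb' z.re with hD
  have hDc : Continuous D := glue_cont (fun x => neBot_LH x) hd'cont hb'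
  have eqn : ∀ n : ℕ, (∫ t in x..y, D ((t:ℂ) - ((1/(n+1):ℝ):ℂ) * I))
      = h ((y:ℂ) - ((1/(n+1):ℝ):ℂ)*I) - h ((x:ℂ) - ((1/(n+1):ℝ):ℂ)*I) := by
    intro n
    have hεpos : (0:ℝ) < 1/(n+1) := by positivity
    apply intervalIntegral.integral_eq_sub_of_hasDerivAt
    · intro t _
      have him : ((t:ℂ) - ((1/(n+1):ℝ):ℂ)*I).im < 0 := by
        simp only [Complex.sub_im, Complex.ofReal_im, Complex.mul_im, Complex.ofReal_re,
          Complex.I_im, Complex.I_re, mul_one, mul_zero, add_zero, zero_sub]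
        linarith
      have hda : DifferentiableAt ℂ h ((t:ℂ) - ((1/(n+1):ℝ):ℂ)*I) :=
        hdiff.differentiableAt (isOpen_LH.mem_nhds him)
      have hcomp : HasDerivAt (fun z : ℂ => h (z - ((1/(n+1):ℝ):ℂ)*I))
          (deriv h ((t:ℂ) - ((1/(n+1):ℝ):ℂ)*I) * 1) (t:ℂ) :=
        HasDerivAt.comp _ hda.hasDerivAt ((hasDerivAt_id _).sub_const _)
      have hfinal := hcomp.comp_ofReal
      have hDeq : D ((t:ℂ) - ((1/(n+1):ℝ):ℂ)*I) = deriv h ((t:ℂ) - ((1/(n+1):ℝ):ℂ)*I) := by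
        rw [hD]; simp only [if_pos him]
      rw [hDeq]
      simpa using hfinal
    · exact ((hDc.comp (by continuity)).intervalIntegrable _ _)
  have habs : ∀ t ∈ Set.uIoc x y, |t| ≤ |x| + |y| := by
    intro t ht
    have h1 : -(|x|+|y|) ≤ min x y :=
      le_min (by linarith [neg_abs_le x, abs_nonneg y]) (by linarith [neg_abs_le y, abs_nonneg x])
    have h2 : max x y ≤ |x|+|y| :=
      max_le (by linarith [le_abs_self x, abs_nonneg y]) (by linarith [le_abs_self y, abs_nonneg x])
    have := ht.1
    have := ht.2
    rw [abs_le]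
    constructor <;> linarith
  obtain ⟨C, hC⟩ := (isCompact_closedBall (0:ℂ) (|x| + |y| + 2)).exists_bound_of_continuousOn
    hDc.continuousOn
  have hmem : ∀ t, |t| ≤ |x| + |y| → ∀ n : ℕ,
      ((t:ℂ) - ((1/(n+1):ℝ):ℂ)*I) ∈ Metric.closedBall (0:ℂ) (|x| + |y| + 2) := by
    intro t ht n
    rw [Metric.mem_closedBall, dist_zero_right]
    have hε1 : (1/(n+1):ℝ) ≤ 1 := by
      rw [div_le_one (by positivity)]
      linarith [Nat.cast_nonneg (α := ℝ) n]
    have hεpos : (0:ℝ) < 1/(n+1) := by positivity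
    calc ‖(t:ℂ) - ((1/(n+1):ℝ):ℂ)*I‖ ≤ ‖(t:ℂ)‖ + ‖((1/(n+1):ℝ):ℂ)*I‖ := norm_sub_le _ _
      _ = |t| + |(1/(n+1):ℝ)| := by
          rw [norm_mul, Complex.norm_I, mul_one, Complex.norm_real, Complex.norm_real,
            Real.norm_eq_abs, Real.norm_eq_abs]
      _ ≤ (|x| + |y|) + 1 := by
          rw [abs_of_pos hεpos]
          linarith
      _ ≤ |x| + |y| + 2 := by linarith
  have hlhs : Tendsto (fun n : ℕ => ∫ t in x..y, D ((t:ℂ) - ((1/(n+1):ℝ):ℂ) * I)) atTop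
      (𝓝 (∫ t in x..y, D (t:ℂ))) := by
    apply intervalIntegral.tendsto_integral_filter_of_dominated_convergence (fun _ => C)
    · exact Eventually.of_forall fun n =>
        ((hDc.comp (by continuity)).aestronglyMeasurable).restrict
    · apply Eventually.of_forall
      intro n
      apply ae_of_all
      intro t ht
      exact hC _ (hmem t (habs t ht) n)
    · exact intervalIntegrable_const
    · apply ae_of_all
      intro t _
      exact (hDc.continuousAt.tendsto).comp (tendsto_seq t)
  have hrhs : Tendsto (fun n : ℕ => h ((y:ℂ) - ((1/(n+1):ℝ):ℂ)*I) - h ((x:ℂ) - ((1/(n+1):ℝ):ℂ)*I))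
      atTop (𝓝 (Hb y - Hb x)) := by
    have h1 := (hb y).comp (tendsto_seq_within y)
    have h2 := (hb x).comp (tendsto_seq_within x)
    simpa using h1.sub h2
  have h1 : (∫ t in x..y, D (t:ℂ)) = Hb y - Hb x := by
    apply tendsto_nhds_unique _ hrhs
    exact hlhs.congr eqn
  calc ∫ t in x..y, Hb' t = ∫ t in x..y, D (t:ℂ) := by
        apply intervalIntegral.integral_congr
        intro t _
        rw [hD]
        simp
    _ = Hb y - Hb x := h1

end NoEuclidAux


end

end Helpers

open NoEuclidAux Topology

/-- Non-existence of a Euclidean solution for non-analytic Cauchy data (Example 1):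
there are no functions `f, g` holomorphic on the open lower half-plane `H`, such that
`f, g, f', g'` extend continuously to `H ∪ ℝ` with boundary values `F, G, F', G'`
realizing the boundary data `F x + conj (G x) = exp (-1/x²)` for `x > 0`,
`F x + conj (G x) = 0` for `x ≤ 0`, and `-F' x + conj (G' x) = 0` for all real `x`. -/
theorem no_euclidean_solution_for_nonanalytic_data :
    ¬ ∃ (f g : ℂ → ℂ) (F G F' G' : ℝ → ℂ),
      DifferentiableOn ℂ f {z : ℂ | z.im < 0} ∧
      DifferentiableOn ℂ g {z : ℂ | z.im < 0} ∧
      (∀ x : ℝ, Tendsto f (nhdsWithin (x : ℂ) {z : ℂ | z.im < 0}) (nhds (F x))) ∧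
      (∀ x : ℝ, Tendsto g (nhdsWithin (x : ℂ) {z : ℂ | z.im < 0}) (nhds (G x))) ∧
      (∀ x : ℝ, Tendsto (deriv f) (nhdsWithin (x : ℂ) {z : ℂ | z.im < 0}) (nhds (F' x))) ∧
      (∀ x : ℝ, Tendsto (deriv g) (nhdsWithin (x : ℂ) {z : ℂ | z.im < 0}) (nhds (G' x))) ∧
      (∀ x : ℝ, 0 < x → F x + starRingEnd ℂ (G x) = Real.exp (-1 / x ^ 2)) ∧
      (∀ x : ℝ, x ≤ 0 → F x + starRingEnd ℂ (G x) = 0) ∧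
      (∀ x : ℝ, -F' x + starRingEnd ℂ (G' x) = 0) := by
  rintro ⟨f, g, F, G, F', G', hf, hg, hFb, hGb, hF'b, hG'b, hpos, hneg, hcauchy⟩
  have hconjG' : ∀ x : ℝ, (starRingEnd ℂ) (G' x) = F' x := fun x => by
    linear_combination hcauchy x
  have hAnf : AnalyticOnNhd ℂ f {z : ℂ | z.im < 0} := hf.analyticOnNhd isOpen_LH
  have hAng : AnalyticOnNhd ℂ g {z : ℂ | z.im < 0} := hg.analyticOnNhd isOpen_LH
  set fd : ℂ → ℂ := fun z => if z.im < 0 then deriv f z else F' z.re with hfd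
  set gd : ℂ → ℂ := fun z => if z.im < 0 then deriv g z else G' z.re with hgd
  have hfdc : Continuous fd := glue_cont (fun x => neBot_LH x) hAnf.deriv.continuousOn hF'b
  have hgdc : Continuous gd := glue_cont (fun x => neBot_LH x) hAng.deriv.continuousOn hG'b
  set Φ : ℂ → ℂ := fun z =>
    if z.im ≤ 0 then fd z else (starRingEnd ℂ) (gd ((starRingEnd ℂ) z)) with hΦ
  have hΦc : Continuous Φ := by
    apply Continuous.if_le hfdc
      ((Complex.continuous_conj).comp (hgdc.comp Complex.continuous_conj))
      Complex.continuous_im continuous_const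
    intro z hz
    have h1 : ¬ z.im < 0 := by rw [hz]; exact lt_irrefl 0
    have h2 : ¬ ((starRingEnd ℂ) z).im < 0 := by
      simp only [Complex.conj_im, hz, neg_zero]; exact lt_irrefl 0
    simp only [Function.comp_apply, hfd, hgd, if_neg h1, if_neg h2, Complex.conj_re]
    exact (hconjG' z.re).symm
  have hΦd : ∀ z : ℂ, z.im ≠ 0 → DifferentiableAt ℂ Φ z := by
    intro z hz
    rcases lt_or_gt_of_ne hz with hneg' | hpos'
    · have hev : Φ =ᶠ[𝓝 z] (fun w => deriv f w) := by
        filter_upwards [isOpen_LH.mem_nhds hneg'] with w hw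
        have hw' : w.im < 0 := hw
        have hwle : w.im ≤ 0 := le_of_lt hw'
        simp only [hΦ, hfd, if_pos hwle, if_pos hw']
      rw [hev.differentiableAt_iff]
      exact (hAnf.deriv z hneg').differentiableAt
    · have hmem : ((starRingEnd ℂ) z).im < 0 := by
        simp only [Complex.conj_im]; linarith
      have hda : DifferentiableAt ℂ (deriv g) ((starRingEnd ℂ) z) :=
        (hAng.deriv _ hmem).differentiableAt
      have hcc := hasDerivAt_conj_conj hda.hasDerivAt
      have hev : Φ =ᶠ[𝓝 z] (fun w => (starRingEnd ℂ) (deriv g ((starRingEnd ℂ) w))) := by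
        filter_upwards [(isOpen_lt continuous_const Complex.continuous_im).mem_nhds hpos']
          with w hw
        have h1 : ¬ w.im ≤ 0 := not_le.2 hw
        have hw' : 0 < w.im := hw
        have h2 : ((starRingEnd ℂ) w).im < 0 := by
          simp only [Complex.conj_im]
          linarith
        simp only [hΦ, hgd, if_neg h1, if_pos h2]
      rw [hev.differentiableAt_iff]
      exact hcc.differentiableAt
  have hent : Differentiable ℂ Φ := morera hΦc hΦd
  have hΦreal : ∀ t : ℝ, Φ ((t:ℂ)) = F' t := by
    intro t
    have h1 : ((t:ℂ)).im ≤ 0 := by simp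
    have h2 : ¬ ((t:ℂ)).im < 0 := by simp
    simp only [hΦ, hfd, if_pos h1, if_neg h2, Complex.ofReal_re]
  -- integral identities
  have hFint : ∀ x y : ℝ, ∫ t in x..y, F' t = F y - F x :=
    fun x y => boundary_integral hf hFb hF'b x y
  have hGint : ∀ x y : ℝ, ∫ t in x..y, G' t = G y - G x :=
    fun x y => boundary_integral hg hGb hG'b x y
  have hF'cont : Continuous F' := glue_cont_real (fun x => neBot_LH x)
    hAnf.deriv.continuousOn hF'b
  have hG'cont : Continuous G' := glue_cont_real (fun x => neBot_LH x)
    hAng.deriv.continuousOn hG'b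
  have hconj_int : ∀ x y : ℝ, ∫ t in x..y, (starRingEnd ℂ) (G' t)
      = (starRingEnd ℂ) (G y) - (starRingEnd ℂ) (G x) := by
    intro x y
    have hint : IntervalIntegrable G' MeasureTheory.volume x y := hG'cont.intervalIntegrable x y
    have hL := Complex.conjCLE.toContinuousLinearMap.intervalIntegral_comp_comm hint
    have : ∫ t in x..y, (starRingEnd ℂ) (G' t) = (starRingEnd ℂ) (∫ t in x..y, G' t) := by
      simpa [Complex.conjCLE_apply] using hL
    rw [this, hGint x y, map_sub]
  have key2 : ∀ x y : ℝ, (∫ t in x..y, (2:ℂ) * F' t)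
      = (F y + (starRingEnd ℂ) (G y)) - (F x + (starRingEnd ℂ) (G x)) := by
    intro x y
    have e1 : (∫ t in x..y, (2:ℂ) * F' t) = (∫ t in x..y, F' t) + ∫ t in x..y, F' t := by
      rw [← intervalIntegral.integral_add (hF'cont.intervalIntegrable x y)
        (hF'cont.intervalIntegrable x y)]
      apply intervalIntegral.integral_congr
      intro t _
      ring
    have e2 : (∫ t in x..y, F' t) = ∫ t in x..y, (starRingEnd ℂ) (G' t) := by
      apply intervalIntegral.integral_congr
      intro t _
      exact (hconjG' t).symm
    rw [e1]
    nth_rewrite 2 [e2]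
    rw [hFint x y, hconj_int x y]
    ring
  -- F' vanishes on negatives
  have hF'neg : ∀ x0 : ℝ, x0 < 0 → F' x0 = 0 := by
    intro x0 hx0
    set Ψ : ℝ → ℂ := fun y => ∫ t in (x0-1)..y, (2:ℂ) * F' t with hΨ
    have hint : Continuous (fun t : ℝ => (2:ℂ) * F' t) := continuous_const.mul hF'cont
    have hder : HasDerivAt Ψ ((2:ℂ) * F' x0) x0 :=
      intervalIntegral.integral_hasDerivAt_right (hint.intervalIntegrable _ _)
        (hint.stronglyMeasurableAtFilter _ _) hint.continuousAt
    have hΨ0 : Ψ =ᶠ[𝓝 x0] (fun _ => (0:ℂ)) := by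
      filter_upwards [Iio_mem_nhds hx0] with y hy
      have h1 := key2 (x0-1) y
      rw [hneg y (le_of_lt hy), hneg (x0-1) (by linarith)] at h1
      simpa [hΨ] using h1
    have hzero : HasDerivAt Ψ 0 x0 :=
      (hasDerivAt_const x0 (0:ℂ)).congr_of_eventuallyEq hΨ0
    have huniq := hder.unique hzero
    exact (mul_eq_zero.1 huniq).resolve_left two_ne_zero
  -- identity theorem
  have hfreq : ∃ᶠ z in 𝓝[≠] (-1:ℂ), Φ z = 0 := by
    have hseq : Tendsto (fun n : ℕ => ((-1 + 1/(n+2) : ℝ) : ℂ)) atTop (𝓝[≠] (-1:ℂ)) := by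
      apply tendsto_nhdsWithin_of_tendsto_nhds_of_eventually_within
      · have h0' := (tendsto_one_div_add_atTop_nhds_zero_nat (𝕜 := ℝ)).comp (tendsto_add_atTop_nat 1)
        have h0 : Tendsto (fun n : ℕ => (1/(n+2) : ℝ)) atTop (𝓝 0) :=
          h0'.congr (fun n => by simp [Function.comp]; ring_nf)
        have h1 : Tendsto (fun n : ℕ => (-1 + 1/(n+2) : ℝ)) atTop (𝓝 (-1 + 0)) :=
          tendsto_const_nhds.add h0
        rw [add_zero] at h1
        have h2 : Tendsto (fun n : ℕ => ((-1 + 1/(n+2) : ℝ) : ℂ)) atTop (𝓝 (((-1:ℝ)):ℂ)) :=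
          (Complex.continuous_ofReal.tendsto (-1:ℝ)).comp h1
        simpa [Function.comp] using h2
      · apply Eventually.of_forall
        intro n
        simp only [mem_compl_iff, mem_singleton_iff]
        intro hcontra
        have h2 : (-1 + 1/(n+2) : ℝ) = -1 := by
          have h5 := congrArg Complex.re hcontra
          simp only [Complex.ofReal_re, Complex.neg_re, Complex.one_re] at h5
          exact h5
        have : (1/(n+2) : ℝ) = 0 := by linarith
        have hp : (0:ℝ) < 1/(n+2) := by positivity
        linarith
    apply hseq.frequently
    apply Frequently.of_forall
    intro n
    have hn : (-1 + 1/(n+2) : ℝ) < 0 := by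
      have h1 : (1/(n+2) : ℝ) ≤ 1/2 :=
        one_div_le_one_div_of_le (by norm_num) (by linarith [Nat.cast_nonneg (α := ℝ) n])
      linarith
    rw [hΦreal]
    exact hF'neg _ hn
  have hΦ0 : EqOn Φ 0 univ :=
    (analyticOnNhd_univ_iff_differentiable.2 hent).eqOn_zero_of_preconnected_of_frequently_eq_zero
      isPreconnected_univ (mem_univ (-1:ℂ)) hfreq
  have hF'all : ∀ t : ℝ, F' t = 0 := by
    intro t
    rw [← hΦreal t]
    exact hΦ0 (mem_univ _)
  -- contradiction
  have hfinal := key2 1 2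
  have hzero2 : (∫ t in (1:ℝ)..2, (2:ℂ) * F' t) = 0 := by
    rw [intervalIntegral.integral_congr (g := fun _ => (0:ℂ))
      (fun t _ => by rw [hF'all t, mul_zero])]
    simp
  rw [hzero2, hpos 2 (by norm_num), hpos 1 (by norm_num)] at hfinal
  have hre : Real.exp (-1 / 2^2) = Real.exp (-1 / 1^2) := by
    have h3 : ((Real.exp (-1 / 2^2) : ℝ) : ℂ) = ((Real.exp (-1 / 1^2) : ℝ) : ℂ) := by
      linear_combination -hfinal
    exact_mod_cast h3
  rw [Real.exp_eq_exp] at hre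
  norm_num at hre
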